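/- arXiv:2510.08962 — 2 statements merged into one kernel-verified Lean document; each statement's English description precedes it below -/
import Mathlib

section
/- Let K > 0, let x_1, …, x_m lie on the upper hyperboloid L = {x ∈ ℝ^{n+1} : ⟨x,x⟩_L = −K, x_0 > 0}, and let ω_1, …, ω_m ≥ 0 with Σ_i ω_i > 0. Set s = Σ_{i=1}^m ω_i x_i. Then the function μ ↦ Σ_{i=1}^m ω_i d_L²(x_i, μ) on L has a unique minimizer, given in closed form by the Lorentzian centroid μ_L = √K · s / √(−⟨s,s⟩_L). (Paper's Proposition 3.) -/
/-!
For `μ, ν` on the hyperboloid, with `a = μ₀` and `b = ν₀`,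
`a b · d_L²(μ, ν) = ⟨bμ − aν, bμ − aν⟩_L + K (a − b)²`,
and `bμ − aν` has vanishing time component, hence is space-like. So `d_L² ≥ 0` on the
hyperboloid, with equality only on the diagonal; in particular `⟨xᵢ, xⱼ⟩_L ≤ −K`, which gives
`⟨s, s⟩_L ≤ −K (∑ ωᵢ)² < 0`. The cost `μ ↦ ∑ ωᵢ d_L²(xᵢ, μ) = −2K ∑ ωᵢ − 2⟨s, μ⟩_L` is affine in
`μ`, and since `μ_L = c s` with `c > 0` it equals `cost(μ_L) + c⁻¹ d_L²(μ_L, μ)`.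
-/

/-- The Lorentzian scalar product on `ℝ^{n+1}`:
`⟨x,y⟩_L = −x₀y₀ + ∑_{i=1}^n xᵢyᵢ`. -/
noncomputable def lorentzInner {n : ℕ} (x y : Fin (n + 1) → ℝ) : ℝ :=
  -(x 0 * y 0) + ∑ i : Fin n, x i.succ * y i.succ

/-- The squared Lorentz distance of two points of the hyperboloid of curvature
parameter `K`: `d_L²(x,y) = −2K − 2⟨x,y⟩_L`. -/
noncomputable def lorentzSqDist {n : ℕ} (K : ℝ) (x y : Fin (n + 1) → ℝ) : ℝ :=
  -(2 * K) - 2 * lorentzInner x y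

open Finset

section LorentzInner

variable {n : ℕ}

lemma lorentzInner_comm (x y : Fin (n + 1) → ℝ) : lorentzInner x y = lorentzInner y x := by
  simp only [lorentzInner, mul_comm]

lemma lorentzInner_smul_left (c : ℝ) (x y : Fin (n + 1) → ℝ) :
    lorentzInner (c • x) y = c * lorentzInner x y := by
  simp only [lorentzInner, Pi.smul_apply, smul_eq_mul, mul_add, mul_sum, mul_assoc, mul_neg]

lemma lorentzInner_smul_right (c : ℝ) (x y : Fin (n + 1) → ℝ) :
    lorentzInner x (c • y) = c * lorentzInner x y := by
  rw [lorentzInner_comm, lorentzInner_smul_left, lorentzInner_comm]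

lemma lorentzInner_sub_left (x y z : Fin (n + 1) → ℝ) :
    lorentzInner (x - y) z = lorentzInner x z - lorentzInner y z := by
  simp only [lorentzInner, Pi.sub_apply, sub_mul, sum_sub_distrib]
  ring

lemma lorentzInner_sub_right (x y z : Fin (n + 1) → ℝ) :
    lorentzInner x (y - z) = lorentzInner x y - lorentzInner x z := by
  rw [lorentzInner_comm, lorentzInner_sub_left, lorentzInner_comm, lorentzInner_comm z]

lemma lorentzInner_sum_left {ι : Type*} (t : Finset ι) (f : ι → Fin (n + 1) → ℝ)
    (y : Fin (n + 1) → ℝ) : lorentzInner (∑ i ∈ t, f i) y = ∑ i ∈ t, lorentzInner (f i) y := by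
  simp only [lorentzInner, Finset.sum_apply, sum_mul, sum_add_distrib, sum_neg_distrib]
  rw [sum_comm]

lemma lorentzInner_sum_right {ι : Type*} (t : Finset ι) (x : Fin (n + 1) → ℝ)
    (f : ι → Fin (n + 1) → ℝ) : lorentzInner x (∑ i ∈ t, f i) = ∑ i ∈ t, lorentzInner x (f i) := by
  rw [lorentzInner_comm, lorentzInner_sum_left]
  exact sum_congr rfl fun i _ => lorentzInner_comm _ _

lemma lorentzInner_self_nonneg_of_apply_zero {w : Fin (n + 1) → ℝ} (hw : w 0 = 0) :
    0 ≤ lorentzInner w w := by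
  simp only [lorentzInner, hw, mul_zero, neg_zero, zero_add]
  exact sum_nonneg fun i _ => mul_self_nonneg _

lemma eq_zero_of_lorentzInner_self_eq_zero {w : Fin (n + 1) → ℝ} (hw0 : w 0 = 0)
    (hw : lorentzInner w w = 0) : w = 0 := by
  simp only [lorentzInner, hw0, mul_zero, neg_zero, zero_add] at hw
  have hsucc (i : Fin n) : w i.succ = 0 :=
    mul_self_eq_zero.1 ((sum_eq_zero_iff_of_nonneg fun j _ => mul_self_nonneg _).1 hw i
      (mem_univ i))
  funext i
  exact Fin.cases hw0 hsucc i

end LorentzInner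

section Hyperboloid

variable {n : ℕ} {K : ℝ}

def lorentzHyperboloid (n : ℕ) (K : ℝ) : Set (Fin (n + 1) → ℝ) :=
  {x | lorentzInner x x = -K ∧ 0 < x 0}

lemma smul_sub_smul_apply_zero (μ ν : Fin (n + 1) → ℝ) : (ν 0 • μ - μ 0 • ν) 0 = 0 := by
  simp [mul_comm]

lemma mul_lorentzSqDist_eq {μ ν : Fin (n + 1) → ℝ} (hμ : lorentzInner μ μ = -K)
    (hν : lorentzInner ν ν = -K) :
    μ 0 * ν 0 * lorentzSqDist K μ ν =
      lorentzInner (ν 0 • μ - μ 0 • ν) (ν 0 • μ - μ 0 • ν) + K * (μ 0 - ν 0) ^ 2 := by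
  simp only [lorentzSqDist, lorentzInner_sub_left, lorentzInner_sub_right,
    lorentzInner_smul_left, lorentzInner_smul_right, lorentzInner_comm ν μ, hμ, hν]
  ring

lemma lorentzSqDist_nonneg (hK : 0 ≤ K) {μ ν : Fin (n + 1) → ℝ}
    (hμ : μ ∈ lorentzHyperboloid n K) (hν : ν ∈ lorentzHyperboloid n K) :
    0 ≤ lorentzSqDist K μ ν := by
  refine nonneg_of_mul_nonneg_right ?_ (mul_pos hμ.2 hν.2)
  rw [mul_lorentzSqDist_eq hμ.1 hν.1]
  exact add_nonneg (lorentzInner_self_nonneg_of_apply_zero (smul_sub_smul_apply_zero μ ν))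
    (by positivity)

lemma lorentzSqDist_eq_zero_iff (hK : 0 < K) {μ ν : Fin (n + 1) → ℝ}
    (hμ : μ ∈ lorentzHyperboloid n K) (hν : ν ∈ lorentzHyperboloid n K) :
    lorentzSqDist K μ ν = 0 ↔ μ = ν := by
  refine ⟨fun h => ?_, fun h => by rw [← h, lorentzSqDist, hμ.1]; ring⟩
  have hspace : 0 ≤ lorentzInner (ν 0 • μ - μ 0 • ν) (ν 0 • μ - μ 0 • ν) :=
    lorentzInner_self_nonneg_of_apply_zero (smul_sub_smul_apply_zero μ ν)
  have hsum := mul_lorentzSqDist_eq hμ.1 hν.1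
  rw [h, mul_zero] at hsum
  have htime_sq : K * (μ 0 - ν 0) ^ 2 = 0 := by
    linarith [mul_nonneg hK.le (sq_nonneg (μ 0 - ν 0))]
  have htime : μ 0 = ν 0 := by simpa [hK.ne', sub_eq_zero] using htime_sq
  have hw : ν 0 • μ - μ 0 • ν = 0 :=
    eq_zero_of_lorentzInner_self_eq_zero (smul_sub_smul_apply_zero μ ν) (by linarith)
  rw [htime, sub_eq_zero] at hw
  exact smul_right_injective _ hν.2.ne' hw

lemma lorentzInner_le_neg_of_mem (hK : 0 ≤ K) {μ ν : Fin (n + 1) → ℝ}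
    (hμ : μ ∈ lorentzHyperboloid n K) (hν : ν ∈ lorentzHyperboloid n K) :
    lorentzInner μ ν ≤ -K := by
  have := lorentzSqDist_nonneg hK hμ hν
  rw [lorentzSqDist] at this
  linarith

lemma lorentzInner_sum_smul_self_le {ι : Type*} [Fintype ι] (hK : 0 ≤ K)
    (x : ι → Fin (n + 1) → ℝ) (hx : ∀ i, x i ∈ lorentzHyperboloid n K)
    (ω : ι → ℝ) (hω : ∀ i, 0 ≤ ω i) :
    lorentzInner (∑ i, ω i • x i) (∑ i, ω i • x i) ≤ -K * (∑ i, ω i) ^ 2 :=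
  calc lorentzInner (∑ i, ω i • x i) (∑ i, ω i • x i)
      = ∑ i, ∑ j, ω i * (ω j * lorentzInner (x j) (x i)) := by
        simp only [lorentzInner_sum_left, lorentzInner_sum_right, lorentzInner_smul_left,
          lorentzInner_smul_right, mul_sum]
    _ ≤ ∑ i, ∑ j, ω i * (ω j * -K) :=
        sum_le_sum fun i _ => sum_le_sum fun j _ => mul_le_mul_of_nonneg_left
          (mul_le_mul_of_nonneg_left (lorentzInner_le_neg_of_mem hK (hx j) (hx i)) (hω j)) (hω i)
    _ = -K * (∑ i, ω i) ^ 2 := by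
        simp only [← mul_sum, ← sum_mul]
        ring

lemma smul_mem_lorentzHyperboloid {s : Fin (n + 1) → ℝ} (hK : 0 ≤ K)
    (hs : lorentzInner s s < 0) (hs0 : 0 < s 0) (hc : 0 < √K / √(-lorentzInner s s)) :
    (√K / √(-lorentzInner s s)) • s ∈ lorentzHyperboloid n K := by
  refine ⟨?_, mul_pos hc hs0⟩
  have hss : 0 < -lorentzInner s s := neg_pos.2 hs
  rw [lorentzInner_smul_left, lorentzInner_smul_right, ← mul_assoc, div_mul_div_comm,
    Real.mul_self_sqrt hK, Real.mul_self_sqrt hss.le]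
  field_simp [hs.ne]

end Hyperboloid

section WeightedCost

variable {n : ℕ} {ι : Type*} [Fintype ι] (K : ℝ) (x : ι → Fin (n + 1) → ℝ) (ω : ι → ℝ)

lemma sum_mul_lorentzSqDist (μ : Fin (n + 1) → ℝ) :
    ∑ i, ω i * lorentzSqDist K (x i) μ =
      -(2 * K * ∑ i, ω i) - 2 * lorentzInner (∑ i, ω i • x i) μ := by
  have hterm (i : ι) : ω i * lorentzSqDist K (x i) μ =
      -(2 * K) * ω i - 2 * (ω i * lorentzInner (x i) μ) := by
    rw [lorentzSqDist]; ring
  simp only [hterm, sum_sub_distrib, ← mul_sum, lorentzInner_sum_left, lorentzInner_smul_left]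
  ring

lemma sum_mul_lorentzSqDist_eq_add {c : ℝ} (hc : c ≠ 0)
    (hcs : lorentzInner (c • ∑ i, ω i • x i) (c • ∑ i, ω i • x i) = -K)
    (μ : Fin (n + 1) → ℝ) :
    ∑ i, ω i * lorentzSqDist K (x i) μ =
      ∑ i, ω i * lorentzSqDist K (x i) (c • ∑ i, ω i • x i) +
        c⁻¹ * lorentzSqDist K (c • ∑ i, ω i • x i) μ := by
  rw [sum_mul_lorentzSqDist, sum_mul_lorentzSqDist, lorentzSqDist]
  rw [lorentzInner_smul_left, lorentzInner_smul_right] at hcs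
  simp only [lorentzInner_smul_left, lorentzInner_smul_right]
  field_simp
  linear_combination hcs

end WeightedCost

/-- **Lorentzian centroid (Proposition 3).**
Let `K > 0`, let the `x i` lie on the upper hyperboloid
`L = {x : ⟨x,x⟩_L = −K, x₀ > 0}`, and let `ω i ≥ 0` with positive sum.  Then the
function `μ ↦ ∑ i, ω i * d_L²(x i, μ)` on `L` has a unique minimizer, given in
closed form by `μ_L = √K • s / √(−⟨s,s⟩_L)` with `s = ∑ i, ω i • x i`. -/
theorem stmt2 {n m : ℕ} (K : ℝ) (hK : 0 < K)
    (x : Fin m → (Fin (n + 1) → ℝ))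
    (hx : ∀ i, lorentzInner (x i) (x i) = -K ∧ 0 < x i 0)
    (ω : Fin m → ℝ) (hω : ∀ i, 0 ≤ ω i) (hsum : 0 < ∑ i, ω i) :
    let s : Fin (n + 1) → ℝ := ∑ i, ω i • x i
    let μL : Fin (n + 1) → ℝ := (Real.sqrt K / Real.sqrt (-lorentzInner s s)) • s
    (lorentzInner μL μL = -K ∧ 0 < μL 0) ∧
    (∀ μ : Fin (n + 1) → ℝ, lorentzInner μ μ = -K → 0 < μ 0 →
      ∑ i, ω i * lorentzSqDist K (x i) μL ≤ ∑ i, ω i * lorentzSqDist K (x i) μ) ∧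
    (∀ μ : Fin (n + 1) → ℝ, lorentzInner μ μ = -K → 0 < μ 0 →
      (∀ ν : Fin (n + 1) → ℝ, lorentzInner ν ν = -K → 0 < ν 0 →
        ∑ i, ω i * lorentzSqDist K (x i) μ ≤ ∑ i, ω i * lorentzSqDist K (x i) ν) →
      μ = μL) := by
  intro s μL
  have hs0 : 0 < s 0 := by
    obtain ⟨i, -, hi⟩ :=
      exists_lt_of_sum_lt (f := fun _ => 0) (g := ω) (s := univ) (by simpa using hsum)
    simp only [s, Finset.sum_apply, Pi.smul_apply, smul_eq_mul]
    exact sum_pos' (fun j _ => mul_nonneg (hω j) (hx j).2.le)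
      ⟨i, mem_univ i, mul_pos hi (hx i).2⟩
  have hss : lorentzInner s s < 0 :=
    (lorentzInner_sum_smul_self_le hK.le x hx ω hω).trans_lt
      (mul_neg_of_neg_of_pos (neg_neg_of_pos hK) (pow_pos hsum 2))
  have hc : 0 < √K / √(-lorentzInner s s) :=
    div_pos (Real.sqrt_pos.2 hK) (Real.sqrt_pos.2 (neg_pos.2 hss))
  have hμL : μL ∈ lorentzHyperboloid n K := smul_mem_lorentzHyperboloid hK.le hss hs0 hc
  have hcost := sum_mul_lorentzSqDist_eq_add K x ω hc.ne' hμL.1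
  refine ⟨hμL, fun μ hμ hμ0 => ?_, fun μ hμ hμ0 hmin => ?_⟩
  · rw [hcost μ]
    exact le_add_of_nonneg_right
      (mul_nonneg (inv_pos.2 hc).le (lorentzSqDist_nonneg hK.le hμL ⟨hμ, hμ0⟩))
  · have hle := hmin μL hμL.1 hμL.2
    rw [hcost μ, add_le_iff_nonpos_right] at hle
    have hdist : lorentzSqDist K μL μ = 0 :=
      le_antisymm (nonpos_of_mul_nonpos_right hle (inv_pos.2 hc))
        (lorentzSqDist_nonneg hK.le hμL ⟨hμ, hμ0⟩)
    exact ((lorentzSqDist_eq_zero_iff hK hμL ⟨hμ, hμ0⟩).1 hdist).symm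
end

section
/- Derivative of the KL divergence under an incremental transport map (the paper's Theorem on Stein and KL): let p : ℝ^n → ℝ be an everywhere positive, continuously differentiable probability density, let q : ℝ^n → ℝ be a probability density with ∫ q(x) |log(q(x)/p(x))| dx < ∞, and let φ : ℝ^n → ℝ^n be continuously differentiable with compact support. For ε ∈ ℝ define T_ε(x) = x + ε φ(x) and F(ε) = ∫_{ℝ^n} q(x) [ log q(x) − log p(T_ε(x)) − log |det(I + ε ∇φ(x))| ] dx, which for all sufficiently small ε equals the KL divergence KL(q_{[T_ε]} ‖ p) of the pushforward density q_{[T_ε]} of q under T_ε from p. Then F is differentiable at ε = 0 and F'(0) = −∫_{ℝ^n} q(x) ( ⟨∇log p(x), φ(x)⟩ + trace(∇φ(x)) ) dx = −E_{x∼q}[ trace(A_p φ(x)) ]. -/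
/-!
Differentiate under the integral sign. Apart from `q log q`, which does not depend on `ε`, the
integrand is `-q log (p (T_ε x) |det ∇T_ε(x)|)`. Its `ε`-derivative is continuous near `ε = 0`
and vanishes off the compact support of `φ`, so it is dominated by a multiple of `|q|`. At
`ε = 0` the derivative of `log det (I + ε ∇φ(x))` is `tr ∇φ(x)`, read off from
`det (1 + ε B) = 1 + ε tr B + O(ε²)`.
-/

open MeasureTheory Filter Topology Set

theorem LinearMap.hasDerivAt_det_id_add_smul {𝕜 E : Type*} [NontriviallyNormedField 𝕜]
    [AddCommGroup E] [Module 𝕜 E] [FiniteDimensional 𝕜 E] (B : E →ₗ[𝕜] E) :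
    HasDerivAt (fun t : 𝕜 => LinearMap.det (LinearMap.id + t • B)) (LinearMap.trace 𝕜 E B) 0 := by
  let b := Module.finBasis 𝕜 E
  set P := (Matrix.det (1 + (Polynomial.X : Polynomial 𝕜) •
    (toMatrix b b B).map Polynomial.C)).divX.divX
  have hexpand : ∀ t : 𝕜, LinearMap.det (LinearMap.id + t • B)
      = 1 + LinearMap.trace 𝕜 E B * t + P.eval t * t ^ 2 := fun t => by
    rw [← LinearMap.det_toMatrix b, map_add, map_smul, LinearMap.toMatrix_id,
      Matrix.det_one_add_smul, LinearMap.trace_eq_matrix_trace 𝕜 b]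
  have hP : HasDerivAt (fun t => P.eval t * t ^ 2) 0 0 :=
    ((P.hasDerivAt 0).mul (hasDerivAt_pow 2 (0 : 𝕜))).congr_deriv (by simp)
  rw [funext hexpand]
  exact ((((hasDerivAt_id (0 : 𝕜)).const_mul (trace 𝕜 E B)).const_add 1).add hP).congr_deriv
    (by simp)

theorem hasDerivAt_comp_add_smul {𝕜 F G : Type*} [NontriviallyNormedField 𝕜]
    [NormedAddCommGroup F] [NormedSpace 𝕜 F] [NormedAddCommGroup G] [NormedSpace 𝕜 G]
    {g : F → G} {x v : F} {t : 𝕜} (hg : DifferentiableAt 𝕜 g (x + t • v)) :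
    HasDerivAt (fun s : 𝕜 => g (x + s • v)) (fderiv 𝕜 g (x + t • v) v) t :=
  hg.hasFDerivAt.comp_hasDerivAt t
    ((((hasDerivAt_id t).smul_const v).const_add x).congr_deriv (one_smul 𝕜 v))

namespace ContinuousLinearMap

variable {𝕜 E : Type*} [NontriviallyNormedField 𝕜] [NormedAddCommGroup E] [NormedSpace 𝕜 E]

@[simp] theorem det_id : (ContinuousLinearMap.id 𝕜 E).det = 1 := LinearMap.det_id

variable [CompleteSpace 𝕜] [FiniteDimensional 𝕜 E]

theorem contDiff_det {k : WithTop ℕ∞} : ContDiff 𝕜 k (fun A : E →L[𝕜] E => A.det) := by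
  let b := Module.finBasis 𝕜 E
  have hleibniz : (fun A : E →L[𝕜] E => A.det) = fun A =>
      ∑ σ : Equiv.Perm (Fin (Module.finrank 𝕜 E)),
        (Equiv.Perm.sign σ : 𝕜) * ∏ i, b.coord (σ i) (A (b i)) := by
    funext A
    rw [ContinuousLinearMap.det, ← LinearMap.det_toMatrix b, Matrix.det_apply]
    simp [LinearMap.toMatrix_apply, Units.smul_def]
  rw [hleibniz]
  refine ContDiff.sum fun σ _ => contDiff_const.mul (contDiff_prod fun i _ => ?_)
  exact (LinearMap.toContinuousLinearMap (b.coord (σ i))).contDiff.comp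
    (ContinuousLinearMap.apply 𝕜 E (b i)).contDiff

theorem fderiv_det_id (B : E →L[𝕜] E) :
    fderiv 𝕜 (fun A : E →L[𝕜] E => A.det) (.id 𝕜 E) B = LinearMap.trace 𝕜 E B := by
  have hline := hasDerivAt_comp_add_smul (x := ContinuousLinearMap.id 𝕜 E) (v := B)
    (t := (0 : 𝕜)) ((contDiff_det (k := 1)).differentiable one_ne_zero _)
  simp only [zero_smul, add_zero] at hline
  exact hline.unique (LinearMap.hasDerivAt_det_id_add_smul (B : E →ₗ[𝕜] E))

theorem eventually_forall_det_id_add_smul_ne_zero {X : Type*} {A : X → E →L[𝕜] E} {M : ℝ}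
    (hA : ∀ x, ‖A x‖ ≤ M) :
    ∀ᶠ t in 𝓝 (0 : 𝕜), ∀ x, (ContinuousLinearMap.id 𝕜 E + t • A x).det ≠ 0 := by
  have hcont : ContinuousAt (fun B : E →L[𝕜] E => (ContinuousLinearMap.id 𝕜 E + B).det) 0 :=
    ((contDiff_det (k := 0)).continuous.comp (continuous_const.add continuous_id)).continuousAt
  obtain ⟨r, hr, hdet⟩ := Metric.eventually_nhds_iff.1 (hcont.eventually_ne (y := 0) (by simp))
  have hM : 0 < |M| + 1 := by positivity
  filter_upwards [Metric.ball_mem_nhds 0 (div_pos hr hM)] with t ht x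
  rw [mem_ball_zero_iff, lt_div_iff₀ hM] at ht
  refine hdet ?_
  rw [dist_zero_right, norm_smul]
  calc ‖t‖ * ‖A x‖ ≤ ‖t‖ * (|M| + 1) := by
        gcongr
        exact (hA x).trans ((le_abs_self M).trans (lt_add_one _).le)
    _ < r := ht

end ContinuousLinearMap

theorem IsCompact.exists_bound_eventually_of_continuousAt {α X E : Type*} [TopologicalSpace α]
    [TopologicalSpace X] [SeminormedAddCommGroup E] {K : Set X} (hK : IsCompact K)
    {f : α → X → E} {a : α} (hf : ∀ x ∈ K, ContinuousAt (Function.uncurry f) (a, x)) :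
    ∃ C, ∀ᶠ b in 𝓝 a, ∀ x ∈ K, ‖f b x‖ ≤ C := by
  obtain ⟨C, hC⟩ := hK.exists_bound_of_continuousOn fun x hx =>
    ((hf x hx).comp (Continuous.prodMk_right a).continuousAt).continuousWithinAt
  refine ⟨C + 1, hK.eventually_forall_of_forall_eventually fun x hx => ?_⟩
  filter_upwards [(hf x hx).norm.eventually (gt_mem_nhds ((hC x hx).trans_lt (lt_add_one C)))]
    with z hz
  exact hz.le

theorem hasDerivAt_integral_mul_of_compact_deriv {X : Type*} [TopologicalSpace X]
    [MeasurableSpace X] [OpensMeasurableSpace X] {μ : Measure X} {q : X → ℝ}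
    {f f' : ℝ → X → ℝ} {K : Set X} (hq : Integrable q μ) (hK : IsCompact K)
    (hf_meas : ∀ᶠ t in 𝓝 0, AEStronglyMeasurable (fun x => q x * f t x) μ)
    (hf_int : Integrable (fun x => q x * f 0 x) μ)
    (hf : ∀ᶠ t in 𝓝 0, ∀ x, HasDerivAt (f · x) (f' t x) t)
    (hf'_cont : ∀ x, ContinuousAt (Function.uncurry f') (0, x))
    (hf'_zero : ∀ t, ∀ x ∉ K, f' t x = 0) :
    HasDerivAt (fun t => ∫ x, q x * f t x ∂μ) (∫ x, q x * f' 0 x ∂μ) 0 := by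
  obtain ⟨C, hC⟩ := hK.exists_bound_eventually_of_continuousAt fun x _ => hf'_cont x
  obtain ⟨s, hs, hs_bound_deriv⟩ := (hC.and hf).exists_mem
  have hf'_meas : AEStronglyMeasurable (fun x => q x * f' 0 x) μ :=
    hq.1.mul (continuous_iff_continuousAt.2 fun x =>
      (hf'_cont x).comp (Continuous.prodMk_right 0).continuousAt).aestronglyMeasurable
  have hbound : ∀ x, ∀ t ∈ s, ‖q x * f' t x‖ ≤ |C| * ‖q x‖ := by
    intro x t ht
    rw [norm_mul, mul_comm]
    gcongr
    by_cases hx : x ∈ K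
    · exact ((hs_bound_deriv t ht).1 x hx).trans (le_abs_self C)
    · simp only [hf'_zero t x hx, norm_zero, abs_nonneg]
  exact (hasDerivAt_integral_of_dominated_loc_of_deriv_le hs hf_meas hf_int hf'_meas
    (ae_of_all _ hbound) (hq.norm.const_mul _)
    (ae_of_all _ fun x t ht => ((hs_bound_deriv t ht).2 x).const_mul (q x))).2

open ContinuousLinearMap

section Transport

variable {E : Type*} [NormedAddCommGroup E] [NormedSpace ℝ E]

/-- The logarithm of `p (T_t x) |det ∇T_t(x)|`, the density of the pullback of `p` along
`T_t = id + t • φ`; the integrand of `F(t)` is `q (log q - logPullbackDensity p φ t)`. -/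
noncomputable def logPullbackDensity (p : E → ℝ) (φ : E → E) (t : ℝ) (x : E) : ℝ :=
  Real.log (p (x + t • φ x)) + Real.log |(ContinuousLinearMap.id ℝ E + t • fderiv ℝ φ x).det|

noncomputable def logPullbackDensityDeriv (p : E → ℝ) (φ : E → E) (t : ℝ) (x : E) : ℝ :=
  fderiv ℝ (fun y => Real.log (p y)) (x + t • φ x) (φ x) +
    fderiv ℝ (fun A : E →L[ℝ] E => A.det) (.id ℝ E + t • fderiv ℝ φ x) (fderiv ℝ φ x) /
      (ContinuousLinearMap.id ℝ E + t • fderiv ℝ φ x).det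

variable {p : E → ℝ} {φ : E → E}

theorem logPullbackDensity_zero (x : E) : logPullbackDensity p φ 0 x = Real.log (p x) := by
  simp [logPullbackDensity]

theorem logPullbackDensityDeriv_of_notMem_tsupport {x : E} (hx : x ∉ tsupport φ) (t : ℝ) :
    logPullbackDensityDeriv p φ t x = 0 := by
  simp [logPullbackDensityDeriv, image_eq_zero_of_notMem_tsupport hx,
    fderiv_of_notMem_tsupport ℝ hx]

variable [FiniteDimensional ℝ E]

theorem logPullbackDensityDeriv_zero (x : E) :
    logPullbackDensityDeriv p φ 0 x =
      fderiv ℝ (fun y => Real.log (p y)) x (φ x) + LinearMap.trace ℝ E (fderiv ℝ φ x) := by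
  simp [logPullbackDensityDeriv, fderiv_det_id]

theorem hasDerivAt_logPullbackDensity (hp : Differentiable ℝ p) (hp0 : ∀ y, p y ≠ 0) {t : ℝ}
    {x : E} (hdet : (ContinuousLinearMap.id ℝ E + t • fderiv ℝ φ x).det ≠ 0) :
    HasDerivAt (logPullbackDensity p φ · x) (logPullbackDensityDeriv p φ t x) t := by
  have hlogp := hasDerivAt_comp_add_smul (x := x) (v := φ x) (t := t) ((hp _).log (hp0 _))
  have hlogdet := (hasDerivAt_comp_add_smul (x := ContinuousLinearMap.id ℝ E)
    (v := fderiv ℝ φ x) (t := t) ((contDiff_det (k := 1)).differentiable one_ne_zero _)).log hdet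
  simp only [logPullbackDensity, Real.log_abs]
  exact hlogp.add hlogdet

theorem continuousAt_logPullbackDensityDeriv (hp : ContDiff ℝ 1 p) (hp0 : ∀ y, p y ≠ 0)
    (hφ : ContDiff ℝ 1 φ) (x : E) :
    ContinuousAt (Function.uncurry (logPullbackDensityDeriv p φ)) (0, x) := by
  have hlogp' := (hp.log hp0).continuous_fderiv one_ne_zero
  have hφ' := hφ.continuous_fderiv one_ne_zero
  have hdet' := (contDiff_det (E := E) (𝕜 := ℝ) (k := 1)).continuous_fderiv one_ne_zero
  have hT : Continuous fun z : ℝ × E => ContinuousLinearMap.id ℝ E + z.1 • fderiv ℝ φ z.2 := by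
    fun_prop
  refine Continuous.continuousAt ?_ |>.add ?_
  · exact (hlogp'.comp (by fun_prop)).clm_apply (hφ.continuous.comp continuous_snd)
  · refine ((hdet'.comp hT).clm_apply (hφ'.comp continuous_snd)).continuousAt.div
      ((contDiff_det (k := 0)).continuous.comp hT).continuousAt ?_
    simp

variable [MeasurableSpace E] [BorelSpace E]

theorem measurable_logPullbackDensity (hp : Measurable p) (hφ : Measurable φ) (t : ℝ) :
    Measurable (logPullbackDensity p φ t) := by
  have hdet : Measurable fun x => (ContinuousLinearMap.id ℝ E + t • fderiv ℝ φ x).det :=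
    (contDiff_det (k := 0)).continuous.measurable.comp (by fun_prop)
  unfold logPullbackDensity
  fun_prop

theorem hasDerivAt_integral_mul_log_sub_logPullbackDensity {μ : Measure E} {q : E → ℝ}
    (hp : ContDiff ℝ 1 p) (hp0 : ∀ y, p y ≠ 0) (hq : Integrable q μ)
    (hqp : Integrable (fun x => q x * Real.log (q x / p x)) μ)
    (hφ : ContDiff ℝ 1 φ) (hφc : HasCompactSupport φ) :
    HasDerivAt (fun t => ∫ x, q x * (Real.log (q x) - logPullbackDensity p φ t x) ∂μ)
      (-∫ x, q x * (fderiv ℝ (fun y => Real.log (p y)) x (φ x) +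
        LinearMap.trace ℝ E (fderiv ℝ φ x)) ∂μ) 0 := by
  obtain ⟨M, hM⟩ :=
    (hφ.continuous_fderiv one_ne_zero).bounded_above_of_compact_support (hφc.fderiv (𝕜 := ℝ))
  have hvalue : ∫ x, q x * -logPullbackDensityDeriv p φ 0 x ∂μ = -∫ x, q x *
      (fderiv ℝ (fun y => Real.log (p y)) x (φ x) + LinearMap.trace ℝ E (fderiv ℝ φ x)) ∂μ := by
    simp only [mul_neg, integral_neg, logPullbackDensityDeriv_zero]
  rw [← hvalue]
  refine hasDerivAt_integral_mul_of_compact_deriv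
    (f := fun t x => Real.log (q x) - logPullbackDensity p φ t x)
    (f' := fun t x => -logPullbackDensityDeriv p φ t x) hq hφc ?_ ?_ ?_ ?_ ?_
  · refine Eventually.of_forall fun t => hq.1.mul ?_
    exact (hq.1.aemeasurable.log.sub (measurable_logPullbackDensity hp.continuous.measurable
      hφ.continuous.measurable t).aemeasurable).aestronglyMeasurable
  · refine hqp.congr (ae_of_all _ fun x => ?_)
    rcases eq_or_ne (q x) 0 with hqx | hqx
    · simp [hqx]
    · simp only [logPullbackDensity_zero, Real.log_div hqx (hp0 x)]
  · filter_upwards [eventually_forall_det_id_add_smul_ne_zero hM] with t ht x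
    exact ((hasDerivAt_const t _).sub (hasDerivAt_logPullbackDensity
      (hp.differentiable one_ne_zero) hp0 (ht x))).congr_deriv (zero_sub _)
  · exact fun x => (continuousAt_logPullbackDensityDeriv hp hp0 hφ x).neg
  · intro t x hx
    simp [logPullbackDensityDeriv_of_notMem_tsupport hx]

end Transport

theorem stmt9_general {n : ℕ} (p q : (Fin n → ℝ) → ℝ) (φ : (Fin n → ℝ) → (Fin n → ℝ))
    (hp : ContDiff ℝ 1 p) (hppos : ∀ x, 0 < p x)
    (hq1 : ∫ x, q x = 1)
    (hqp : Integrable (fun x => q x * |Real.log (q x / p x)|))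
    (hφ : ContDiff ℝ 1 φ) (hφc : HasCompactSupport φ) :
    HasDerivAt
      (fun ε : ℝ => ∫ x, q x *
        (Real.log (q x) - Real.log (p (x + ε • φ x)) -
          Real.log |LinearMap.det
            ((LinearMap.id : (Fin n → ℝ) →ₗ[ℝ] (Fin n → ℝ)) +
              ε • (fderiv ℝ φ x).toLinearMap)|))
      (-∫ x, q x *
        (fderiv ℝ (fun y => Real.log (p y)) x (φ x) +
          LinearMap.trace ℝ (Fin n → ℝ) (fderiv ℝ φ x).toLinearMap))
      0 := by
  have hq : Integrable q := .of_integral_ne_zero (by rw [hq1]; exact one_ne_zero)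
  have hqlog : Integrable (fun x => q x * Real.log (q x / p x)) := by
    refine hqp.congr' ?_ (ae_of_all _ fun x => by simp)
    exact hq.1.mul
      (hq.1.aemeasurable.div hp.continuous.measurable.aemeasurable).log.aestronglyMeasurable
  have h := hasDerivAt_integral_mul_log_sub_logPullbackDensity hp (fun x => (hppos x).ne') hq
    hqlog hφ hφc
  simp only [logPullbackDensity, ← sub_sub] at h
  exact h

/-- **Derivative of the KL divergence under an incremental transport map
(the Stein–KL theorem).**
Let `p` be an everywhere positive C¹ probability density on `ℝⁿ`, `q` a probability
density with `∫ q |log(q/p)| < ∞`, and `φ : ℝⁿ → ℝⁿ` C¹ with compact support.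
With `T_ε(x) = x + ε φ(x)` and
`F(ε) = ∫ q(x) [log q(x) − log p(T_ε(x)) − log |det(I + ε ∇φ(x))|] dx`
(which for small `ε` equals `KL(q_{[T_ε]} ‖ p)`), `F` is differentiable at `0` with
`F'(0) = −∫ q(x) (⟨∇log p(x), φ(x)⟩ + tr ∇φ(x)) dx = −E_{x∼q}[tr(A_p φ(x))]`. -/
theorem stmt9 {n : ℕ} (p q : (Fin n → ℝ) → ℝ) (φ : (Fin n → ℝ) → (Fin n → ℝ))
    (hp : ContDiff ℝ 1 p) (hppos : ∀ x, 0 < p x) (hp1 : ∫ x, p x = 1)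
    (hq0 : ∀ x, 0 ≤ q x) (hq1 : ∫ x, q x = 1)
    (hqp : Integrable (fun x => q x * |Real.log (q x / p x)|))
    (hφ : ContDiff ℝ 1 φ) (hφc : HasCompactSupport φ) :
    HasDerivAt
      (fun ε : ℝ => ∫ x, q x *
        (Real.log (q x) - Real.log (p (x + ε • φ x)) -
          Real.log |LinearMap.det
            ((LinearMap.id : (Fin n → ℝ) →ₗ[ℝ] (Fin n → ℝ)) +
              ε • (fderiv ℝ φ x).toLinearMap)|))
      (-∫ x, q x *
        (fderiv ℝ (fun y => Real.log (p y)) x (φ x) +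
          LinearMap.trace ℝ (Fin n → ℝ) (fderiv ℝ φ x).toLinearMap))
      0 :=
  stmt9_general p q φ hp hppos hq1 hqp hφ hφc
end
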